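/- arXiv:1605.09508 — 3 statements merged into one kernel-verified Lean document; each statement's English description precedes it below -/
import Mathlib

section
/- For every real number X > 0, the number of positive integers n ≤ X with h(n) ≠ 0 is at most X/2 + (3/2 + √2)·√X + 1 + (3√2)/2. -/
/-!
If `h(n) ≠ 0` then `n = x·m` with `x ≤ m ≤ 2x`: take `m = x + y` for a pair in `A_n`, `m = x` for
`B_n` and `m = 2x` for `C_n`. For `n ≤ N` this forces `m² ≤ 2N`, and each such `m` admits
`⌊m/2⌋ + 1` values of `x`. Summing over `m ≤ √(2N)` gives at most `M²/4 + 5M/4` values of `n`,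
where `M = ⌊√(2N)⌋ ≤ √2·√X`, which is below the stated bound.
-/

/-- The set `A_n` of pairs `(x, y)` of positive integers with `n = x(x+y)` and `1 ≤ y ≤ x-1`. -/
def lerchA (n : ℕ) : Finset (ℕ × ℕ) :=
  (Finset.range (n + 1) ×ˢ Finset.range (n + 1)).filter
    (fun p => 0 < p.1 ∧ 1 ≤ p.2 ∧ p.2 ≤ p.1 - 1 ∧ n = p.1 * (p.1 + p.2))

/-- The set `B_n` of positive integers `x` with `n = x²`. -/
def lerchB (n : ℕ) : Finset ℕ :=
  (Finset.range (n + 1)).filter (fun x => 0 < x ∧ n = x ^ 2)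

/-- The set `C_n` of positive integers `x` with `n = 2x²`. -/
def lerchC (n : ℕ) : Finset ℕ :=
  (Finset.range (n + 1)).filter (fun x => 0 < x ∧ n = 2 * x ^ 2)

/-- `h(n) = 2·|A_n| + |B_n| + |C_n|`, the `n`-th coefficient of the half Lerch sum. -/
def lerchh (n : ℕ) : ℕ := 2 * (lerchA n).card + (lerchB n).card + (lerchC n).card

open Finset

theorem exists_mul_eq_of_lerchh_ne_zero {n : ℕ} (h : lerchh n ≠ 0) :
    ∃ x m, 0 < x ∧ x ≤ m ∧ m ≤ 2 * x ∧ x * m = n := by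
  unfold lerchh at h
  obtain hA | hB | hC : 0 < #(lerchA n) ∨ 0 < #(lerchB n) ∨ 0 < #(lerchC n) := by omega
  · obtain ⟨⟨x, y⟩, hp⟩ := card_pos.mp hA
    obtain ⟨-, hx, hy, hyx, rfl⟩ := (mem_filter.mp hp)
    exact ⟨x, x + y, hx, by omega, by omega, rfl⟩
  · obtain ⟨x, hp⟩ := card_pos.mp hB
    obtain ⟨-, hx, rfl⟩ := (mem_filter.mp hp)
    exact ⟨x, x, hx, le_rfl, by omega, by ring⟩
  · obtain ⟨x, hp⟩ := card_pos.mp hC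
    obtain ⟨-, hx, rfl⟩ := (mem_filter.mp hp)
    exact ⟨x, 2 * x, hx, by omega, le_rfl, by ring⟩

def nearSquarePairs (M : ℕ) : Finset (Σ _ : ℕ, ℕ) :=
  (Icc 1 M).sigma fun m => Icc ((m + 1) / 2) m

theorem card_nearSquarePairs (M : ℕ) :
    #(nearSquarePairs M) = ∑ m ∈ Icc 1 M, (m / 2 + 1) := by
  rw [nearSquarePairs, card_sigma]
  refine sum_congr rfl fun m _ => ?_
  rw [Nat.card_Icc]
  omega

theorem mul_mem_image_nearSquarePairs {N x m : ℕ} (hx : 0 < x) (hxm : x ≤ m) (hmx : m ≤ 2 * x)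
    (hN : x * m ≤ N) :
    x * m ∈ (nearSquarePairs (Nat.sqrt (2 * N))).image fun p => p.2 * p.1 := by
  have hm : m ≤ Nat.sqrt (2 * N) := Nat.le_sqrt.mpr <|
    calc m * m ≤ 2 * x * m := Nat.mul_le_mul_right _ hmx
      _ ≤ 2 * N := by rw [mul_assoc]; omega
  refine mem_image.mpr ⟨⟨m, x⟩, ?_, rfl⟩
  simp only [nearSquarePairs, mem_sigma, mem_Icc]
  omega

theorem sum_Icc_div_two_add_one_le (M : ℕ) :
    (∑ m ∈ Icc 1 M, ((m / 2 + 1 : ℕ) : ℝ)) ≤ (M : ℝ) ^ 2 / 4 + 5 * M / 4 := by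
  induction M with
  | zero => simp
  | succ M ih =>
    rw [sum_Icc_succ_top (by omega)]
    have hstep : (((M + 1) / 2 : ℕ) : ℝ) ≤ ((M + 1 : ℕ) : ℝ) / 2 := Nat.cast_div_le
    push_cast at ih hstep ⊢
    linarith

/-- For every real `X > 0`, `#{1 ≤ n ≤ X : h(n) ≠ 0} ≤ X/2 + (3/2 + √2)√X + 1 + 3√2/2`. -/
theorem card_h_ne_zero_le (X : ℝ) (hX : 0 < X) :
    (((Finset.Icc 1 ⌊X⌋₊).filter (fun n => lerchh n ≠ 0)).card : ℝ)
      ≤ X / 2 + (3 / 2 + Real.sqrt 2) * Real.sqrt X + 1 + 3 * Real.sqrt 2 / 2 := by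
  set N := ⌊X⌋₊
  set M := Nat.sqrt (2 * N)
  have hsub : (Icc 1 N).filter (fun n => lerchh n ≠ 0) ⊆
      (nearSquarePairs M).image fun p => p.2 * p.1 := by
    intro n hn
    obtain ⟨hnN, hh⟩ := mem_filter.mp hn
    obtain ⟨x, m, hx, hxm, hmx, rfl⟩ := exists_mul_eq_of_lerchh_ne_zero hh
    exact mul_mem_image_nearSquarePairs hx hxm hmx (mem_Icc.mp hnN).2
  have hM_sq : (M : ℝ) ^ 2 ≤ 2 * X := by
    have hMN : ((M * M : ℕ) : ℝ) ≤ ((2 * N : ℕ) : ℝ) := by exact_mod_cast Nat.sqrt_le (2 * N)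
    have hNX : (N : ℝ) ≤ X := Nat.floor_le hX.le
    push_cast at hMN
    nlinarith
  have hM : (M : ℝ) ≤ Real.sqrt 2 * Real.sqrt X := by
    rw [← Real.sqrt_mul zero_le_two]
    exact Real.le_sqrt_of_sq_le hM_sq
  have hs2 : Real.sqrt 2 ≤ 2 := by
    rw [Real.sqrt_le_left zero_le_two]; norm_num
  calc (#((Icc 1 N).filter (fun n => lerchh n ≠ 0)) : ℝ)
      ≤ #(nearSquarePairs M) := by exact_mod_cast (card_le_card hsub).trans card_image_le
    _ ≤ (M : ℝ) ^ 2 / 4 + 5 * M / 4 := by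
        rw [card_nearSquarePairs, Nat.cast_sum]
        exact sum_Icc_div_two_add_one_le M
    _ ≤ X / 2 + 5 / 4 * (Real.sqrt 2 * Real.sqrt X) := by linarith
    _ ≤ X / 2 + (3 / 2 + Real.sqrt 2) * Real.sqrt X + 1 + 3 * Real.sqrt 2 / 2 := by
        nlinarith [Real.sqrt_nonneg 2, Real.sqrt_nonneg X]
end

section
/- For every positive integer k ≥ 1, h(2^k) = 1. -/
/-!
A factorisation `p^k = x(x+y)` with `0 < y < x` would make `x` and `x + y` powers of `p` with
`x < x + y < 2x`, which is impossible; so only the terms `|B_n|` and `|C_n|` contribute to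
`h(2^k)`. According to the parity of `k`, `2^k` is a square or twice a square, and never both,
since the `2`-adic valuation of a square is even and that of twice a square is odd.
-/

theorem lerchA_prime_pow_eq_empty {p : ℕ} (hp : p.Prime) (k : ℕ) : lerchA (p ^ k) = ∅ := by
  refine Finset.filter_false_of_mem fun ⟨x, y⟩ _ ⟨_, hy1, hyx, hn⟩ => ?_
  dsimp only at hy1 hyx hn
  obtain ⟨a, -, rfl⟩ := (Nat.dvd_prime_pow hp).mp (Dvd.intro _ hn.symm)
  obtain ⟨b, -, hb⟩ := (Nat.dvd_prime_pow hp).mp (Dvd.intro_left _ hn.symm)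
  have hab : a < b := (Nat.pow_lt_pow_iff_right hp.one_lt).mp (by omega)
  have : 2 * p ^ a ≤ p ^ b := calc
    2 * p ^ a ≤ p * p ^ a := Nat.mul_le_mul_right _ hp.two_le
    _ = p ^ (a + 1) := (pow_succ' p a).symm
    _ ≤ p ^ b := Nat.pow_le_pow_right hp.pos hab
  omega

theorem lerchB_sq {x : ℕ} (hx : 0 < x) : lerchB (x ^ 2) = {x} := by
  ext z
  simp only [lerchB, Finset.mem_filter, Finset.mem_range, Finset.mem_singleton]
  constructor
  · rintro ⟨-, -, h⟩
    exact (Nat.pow_left_injective two_ne_zero h).symm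
  · rintro rfl
    exact ⟨by nlinarith, hx, rfl⟩

theorem lerchC_two_mul_sq {x : ℕ} (hx : 0 < x) : lerchC (2 * x ^ 2) = {x} := by
  ext z
  simp only [lerchC, Finset.mem_filter, Finset.mem_range, Finset.mem_singleton]
  constructor
  · rintro ⟨-, -, h⟩
    exact (Nat.pow_left_injective two_ne_zero (Nat.eq_of_mul_eq_mul_left two_pos h)).symm
  · rintro rfl
    exact ⟨by nlinarith, hx, rfl⟩

theorem lerchB_eq_empty {n : ℕ} (h : ∀ x, 0 < x → n ≠ x ^ 2) : lerchB n = ∅ :=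
  Finset.filter_false_of_mem fun x _ ⟨hx, hn⟩ => h x hx hn

theorem lerchC_eq_empty {n : ℕ} (h : ∀ x, 0 < x → n ≠ 2 * x ^ 2) : lerchC n = ∅ :=
  Finset.filter_false_of_mem fun x _ ⟨hx, hn⟩ => h x hx hn

theorem sq_ne_two_mul_sq {x y : ℕ} (hy : y ≠ 0) : x ^ 2 ≠ 2 * y ^ 2 := by
  intro h
  have hval := congrArg (padicValNat 2) h
  rw [padicValNat.pow, padicValNat.mul two_ne_zero (pow_ne_zero _ hy), padicValNat.pow,
    padicValNat_self] at hval
  omega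

theorem h_two_pow_general (k : ℕ) : lerchh (2 ^ k) = 1 := by
  rw [lerchh, lerchA_prime_pow_eq_empty Nat.prime_two]
  obtain ⟨m, rfl | rfl⟩ := Nat.even_or_odd' k
  · rw [pow_mul', lerchB_sq (Nat.two_pow_pos m),
      lerchC_eq_empty fun x hx => sq_ne_two_mul_sq hx.ne']
    rfl
  · rw [pow_succ', pow_mul', lerchC_two_mul_sq (Nat.two_pow_pos m),
      lerchB_eq_empty fun x _ h => sq_ne_two_mul_sq (Nat.two_pow_pos m).ne' h.symm]
    rfl

/-- For every positive integer `k`, `h(2^k) = 1`. -/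
theorem h_two_pow (k : ℕ) (hk : 1 ≤ k) : lerchh (2 ^ k) = 1 :=
  h_two_pow_general k
end

section
/- If p is an odd prime, then h(p·(p+1)) = 2 and h((p−1)·p) = 2. -/
/-!
Writing `e = x + y`, the set `A_n` consists of the factorisations `n = d·e` with `d < e < 2d`.
When `n = p·m` with `p` prime and `m < 2p`, the prime `p` divides `d` or `e`, and the window
`d < e < 2d` forces the cofactor to be `1`; so `{d, e} = {p, m}` is the only such factorisation.
For `p ∤ m` the number `p·m` is neither a square nor, for odd `p`, twice a square, so `B_n` and
`C_n` are empty. Both `p(p+1)` and `(p-1)p` are of this shape for an odd prime `p`.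
-/

theorem Nat.Prime.eq_min_max_of_mul_eq {p m d e : ℕ} (hp : p.Prime) (hm : m < 2 * p)
    (hde : d < e) (hed : e < 2 * d) (h : d * e = p * m) : d = min p m ∧ e = max p m := by
  rcases hp.dvd_mul.mp (Dvd.intro m h.symm) with ⟨k, rfl⟩ | ⟨k, rfl⟩
  · have hke : k * e = m := Nat.eq_of_mul_eq_mul_left hp.pos (by rw [← h]; ring)
    have hk : k = 1 := by
      rcases Nat.lt_or_ge k 2 with hk | hk
      · interval_cases k <;> omega
      · nlinarith
    subst hk
    omega
  · have hdk : d * k = m := Nat.eq_of_mul_eq_mul_left hp.pos (by rw [← h]; ring)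
    have hk : k = 1 := by
      rcases Nat.lt_or_ge k 2 with hk | hk
      · interval_cases k <;> omega
      · nlinarith
    subst hk
    omega

theorem mem_lerchA {n x y : ℕ} : (x, y) ∈ lerchA n ↔ 0 < y ∧ y < x ∧ n = x * (x + y) := by
  simp only [lerchA, Finset.mem_filter, Finset.mem_product, Finset.mem_range]
  constructor
  · rintro ⟨-, -, hy, hyx, rfl⟩
    omega
  · rintro ⟨hy, hyx, rfl⟩
    refine ⟨⟨?_, ?_⟩, by omega, by omega, by omega, rfl⟩ <;> nlinarith

theorem lerchA_prime_mul {p m : ℕ} (hp : p.Prime) (hmp : m ≠ p) (hm : m < 2 * p)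
    (hp' : p < 2 * m) : lerchA (p * m) = {(min p m, max p m - min p m)} := by
  ext ⟨x, y⟩
  rw [mem_lerchA, Finset.mem_singleton, Prod.mk.injEq]
  constructor
  · rintro ⟨hy, hyx, h⟩
    have := hp.eq_min_max_of_mul_eq hm (by omega) (by omega) h.symm
    omega
  · rintro ⟨rfl, rfl⟩
    refine ⟨by omega, by omega, ?_⟩
    rw [Nat.add_sub_cancel' (min_le_max), min_mul_max]

theorem Nat.Prime.dvd_or_dvd_of_mul_eq_mul_sq {p m c x : ℕ} (hp : p.Prime)
    (h : p * m = c * x ^ 2) : p ∣ c ∨ p ∣ m := by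
  rcases hp.dvd_mul.mp (Dvd.intro m h) with hc | hx
  · exact .inl hc
  · obtain ⟨t, rfl⟩ := hp.dvd_of_dvd_pow hx
    exact .inr ⟨c * t ^ 2, Nat.eq_of_mul_eq_mul_left hp.pos (by rw [h]; ring)⟩

theorem lerchB_prime_mul {p m : ℕ} (hp : p.Prime) (hpm : ¬ p ∣ m) : lerchB (p * m) = ∅ := by
  refine Finset.eq_empty_of_forall_notMem fun x hx => ?_
  obtain ⟨-, -, h⟩ := Finset.mem_filter.mp hx
  rcases hp.dvd_or_dvd_of_mul_eq_mul_sq (h.trans (one_mul _).symm) with h1 | hm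
  · exact hp.not_dvd_one h1
  · exact hpm hm

theorem lerchC_prime_mul {p m : ℕ} (hp : p.Prime) (hp2 : p ≠ 2) (hpm : ¬ p ∣ m) :
    lerchC (p * m) = ∅ := by
  refine Finset.eq_empty_of_forall_notMem fun x hx => ?_
  obtain ⟨-, -, h⟩ := Finset.mem_filter.mp hx
  rcases hp.dvd_or_dvd_of_mul_eq_mul_sq h with h2 | hm
  · exact hp2 ((Nat.prime_dvd_prime_iff_eq hp Nat.prime_two).mp h2)
  · exact hpm hm

theorem lerchh_prime_mul {p m : ℕ} (hp : p.Prime) (hp2 : p ≠ 2) (hpm : ¬ p ∣ m)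
    (hm : m < 2 * p) (hp' : p < 2 * m) : lerchh (p * m) = 2 := by
  have hmp : m ≠ p := by rintro rfl; exact hpm dvd_rfl
  rw [lerchh, lerchA_prime_mul hp hmp hm hp', lerchB_prime_mul hp hpm,
    lerchC_prime_mul hp hp2 hpm]
  rfl

/-- If `p` is an odd prime, then `h(p(p+1)) = 2` and `h((p-1)p) = 2`. -/
theorem h_prime_times_neighbor (p : ℕ) (hp : p.Prime) (hodd : Odd p) :
    lerchh (p * (p + 1)) = 2 ∧ lerchh ((p - 1) * p) = 2 := by
  have hp2 : p ≠ 2 := hodd.ne_two_of_dvd_nat dvd_rfl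
  have hp3 : 3 ≤ p := by have := hp.two_le; omega
  constructor
  · have hpm : ¬ p ∣ p + 1 := fun h => hp.not_dvd_one ((Nat.dvd_add_right dvd_rfl).mp h)
    exact lerchh_prime_mul hp hp2 hpm (by omega) (by omega)
  · have hpm : ¬ p ∣ p - 1 := Nat.not_dvd_of_pos_of_lt (by omega) (by omega)
    rw [mul_comm]
    exact lerchh_prime_mul hp hp2 hpm (by omega) (by omega)
end
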